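/- (Equation (28) of the paper, connection of the total probability to the Visscher staggered expression.) Assume the abstract FDTD-Q region setup (only update (UpdB) is used). Then for all n : ℕ, P n = ψR n ⬝ᵥ V.mulVec (ψR n) + ψI n ⬝ᵥ V.mulVec (ψI (n+1)) - (Δt/ℏ) * (ψI n ⬝ᵥ H⊥.mulVec (gR n)). In particular, when H⊥.mulVec (gR n) = 0 the total probability equals the staggered Visscher-type expression ψR n ⬝ᵥ V.mulVec (ψR n) + ψI n ⬝ᵥ V.mulVec (ψI (n+1)). -/

import Mathlib

open Matrix

/-!
Pairing the update (UpdB) with `ψI n` expresses `ψI n ⬝ᵥ V (ψI (n+1) - ψI n)` as `Δt/ℏ` times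
`ψI n ⬝ᵥ (-H ψR n + H⊥ gR n)`; substituting this into `P n` cancels the `H`-term and leaves
the boundary term.
-/

theorem dotProduct_mulVec_eq_of_smul_mulVec_sub_eq {𝕜 ι : Type*} [Field 𝕜] [Fintype ι]
    (V : Matrix ι ι 𝕜) {c a : 𝕜} (hc : c ≠ 0) {x x' y : ι → 𝕜}
    (h : c • V *ᵥ (x' - x) = a • y) (u : ι → 𝕜) :
    u ⬝ᵥ V *ᵥ x = u ⬝ᵥ V *ᵥ x' - a / c * (u ⬝ᵥ y) := by
  have hu := congrArg (u ⬝ᵥ ·) h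
  simp only [mulVec_sub, dotProduct_smul, dotProduct_sub, smul_eq_mul] at hu
  field_simp
  linear_combination -hu

theorem fdtdq_probability_staggered_form
    (N M : ℕ) (ℏ Δt : ℝ) (hℏ : 0 < ℏ)
    (H : Matrix (Fin N) (Fin N) ℝ)
    (Hb : Matrix (Fin N) (Fin M) ℝ)
    (d : Fin N → ℝ)
    (ψR ψI : ℕ → (Fin N → ℝ)) (gR : ℕ → (Fin M → ℝ))
    (hUpdB : ∀ n : ℕ, ℏ • (Matrix.diagonal d).mulVec (ψI (n+1) - ψI n)
        = Δt • (-(H.mulVec (ψR n)) + Hb.mulVec (gR n)))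
    (P : ℕ → ℝ)
    (hP : ∀ n : ℕ, P n = ψR n ⬝ᵥ (Matrix.diagonal d).mulVec (ψR n)
        + ψI n ⬝ᵥ (Matrix.diagonal d).mulVec (ψI n)
        - (Δt/ℏ) * (ψI n ⬝ᵥ H.mulVec (ψR n))) :
    (∀ n : ℕ, P n = ψR n ⬝ᵥ (Matrix.diagonal d).mulVec (ψR n)
        + ψI n ⬝ᵥ (Matrix.diagonal d).mulVec (ψI (n+1))
        - (Δt/ℏ) * (ψI n ⬝ᵥ Hb.mulVec (gR n)))
    ∧ (∀ n : ℕ, Hb.mulVec (gR n) = 0 →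
        P n = ψR n ⬝ᵥ (Matrix.diagonal d).mulVec (ψR n)
          + ψI n ⬝ᵥ (Matrix.diagonal d).mulVec (ψI (n+1))) := by
  have staggered : ∀ n, P n = ψR n ⬝ᵥ (Matrix.diagonal d).mulVec (ψR n)
      + ψI n ⬝ᵥ (Matrix.diagonal d).mulVec (ψI (n+1))
      - (Δt/ℏ) * (ψI n ⬝ᵥ Hb.mulVec (gR n)) := fun n => by
    rw [hP n, dotProduct_mulVec_eq_of_smul_mulVec_sub_eq _ hℏ.ne' (hUpdB n) (ψI n),
      dotProduct_add, dotProduct_neg]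
    ring
  refine ⟨staggered, fun n hb => ?_⟩
  rw [staggered n, hb, dotProduct_zero, mul_zero, sub_zero]
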